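/- Let φ be the substitution φ(i) = 0^t(i+1) for i < m-1, φ(m-1) = 0^s with t ≥ s ≥ 1. If p₁ = w₁·a·reverse(w₁) is a palindrome of odd length with center a ≠ m-1, then φ(p₁)·0^t = w₂·(a+1)·reverse(w₂) where w₂ = φ(w₁)·0^t; in particular φ(p₁)·0^t is a palindrome of odd length with center a+1. -/

import Mathlib

/-!
Padding by `0^t` turns reversal into a conjugation: every image `φ(x)` satisfies
`φ(x)·0^t = 0^t·reverse(φ(x))` (both sides are `0^t (x+1) 0^t`, resp. `0^(s+t)`), hence
`φ(reverse w)·0^t = 0^t·reverse(φ(w))` for every word `w`. Since `φ(a) = 0^t (a+1)`,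
`φ(w₁ a reverse(w₁))·0^t = φ(w₁)·0^t·(a+1)·0^t·reverse(φ(w₁))`.
-/

/-- The canonical substitution associated with a simple Parry number `β` with
`d_β(1) = t t ⋯ t s` (`m` digits): `φ(i) = 0^t (i+1)` for `i ≤ m-2` and
`φ(m-1) = 0^s`.  Letters are encoded as natural numbers `0, …, m-1`. -/
def phi (m t s : ℕ) : ℕ → List ℕ := fun a =>
  if a = m - 1 then List.replicate s 0 else List.replicate t 0 ++ [a + 1]

/-- Application of a morphism to a finite word. -/
def applyMorph (f : ℕ → List ℕ) (l : List ℕ) : List ℕ := l.flatMap f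

/-- `w` is a factor of the fixed point `u_β = lim φⁿ(0)` of the substitution,
i.e. `w` is a factor of some `φⁿ(0)`. -/
def inLang (f : ℕ → List ℕ) (w : List ℕ) : Prop :=
  ∃ k : ℕ, w <:+: (applyMorph f)^[k] [0]

section applyMorph

variable {f : ℕ → List ℕ}

@[simp]
theorem applyMorph_nil : applyMorph f [] = [] := rfl

@[simp]
theorem applyMorph_singleton (x : ℕ) : applyMorph f [x] = f x := by
  simp [applyMorph]

@[simp]
theorem applyMorph_cons (x : ℕ) (w : List ℕ) : applyMorph f (x :: w) = f x ++ applyMorph f w :=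
  List.flatMap_cons

@[simp]
theorem applyMorph_append (u v : List ℕ) :
    applyMorph f (u ++ v) = applyMorph f u ++ applyMorph f v :=
  List.flatMap_append

theorem applyMorph_reverse_append {z : List ℕ} (hf : ∀ x, f x ++ z = z ++ (f x).reverse)
    (w : List ℕ) : applyMorph f w.reverse ++ z = z ++ (applyMorph f w).reverse := by
  induction w with
  | nil => simp
  | cons x w ih =>
    calc applyMorph f (x :: w).reverse ++ z
        = applyMorph f w.reverse ++ (f x ++ z) := by simp
      _ = z ++ (applyMorph f w).reverse ++ (f x).reverse := by
        rw [hf, ← List.append_assoc, ih]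
      _ = z ++ (applyMorph f (x :: w)).reverse := by simp

end applyMorph

theorem phi_of_ne {m t s a : ℕ} (ha : a ≠ m - 1) :
    phi m t s a = List.replicate t 0 ++ [a + 1] := if_neg ha

theorem phi_append_replicate (m t s x : ℕ) :
    phi m t s x ++ List.replicate t 0 = List.replicate t 0 ++ (phi m t s x).reverse := by
  by_cases hx : x = m - 1
  · simp [phi, hx, Nat.add_comm]
  · simp [phi_of_ne hx]

theorem stmt12_general (m t s : ℕ)
    (w₁ : List ℕ)
    (a : ℕ) (ham : a ≠ m - 1) :
    applyMorph (phi m t s) (w₁ ++ [a] ++ w₁.reverse) ++ List.replicate t 0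
      = (applyMorph (phi m t s) w₁ ++ List.replicate t 0) ++ [a + 1]
          ++ (applyMorph (phi m t s) w₁ ++ List.replicate t 0).reverse := by
  have hconj := applyMorph_reverse_append (phi_append_replicate m t s) w₁
  simp only [applyMorph_append, applyMorph_singleton, phi_of_ne ham, List.append_assoc,
    hconj]
  simp

/-- If `p₁ = w₁·a·reverse(w₁)` is an odd palindrome with center `a ≠ m-1`,
then `φ(p₁)·0^t = w₂·(a+1)·reverse(w₂)` with `w₂ = φ(w₁)·0^t`. -/
theorem stmt12 (m t s : ℕ) (hm : 1 ≤ m) (hs : 1 ≤ s) (hts : s ≤ t)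
    (w₁ : List ℕ) (hw : ∀ x ∈ w₁, x < m)
    (a : ℕ) (ha : a < m) (ham : a ≠ m - 1) :
    applyMorph (phi m t s) (w₁ ++ [a] ++ w₁.reverse) ++ List.replicate t 0
      = (applyMorph (phi m t s) w₁ ++ List.replicate t 0) ++ [a + 1]
          ++ (applyMorph (phi m t s) w₁ ++ List.replicate t 0).reverse :=
  stmt12_general m t s w₁ a ham
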